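/- The semi-infinite constraint 'for all a in the budget uncertainty set, ∑_k a_k x_k ≤ E' is equivalent to the existence of β, γ, θ ≥ 0 with β_k − γ_k + θ = x_k for all k and ∑_k U β_k − ∑_k L γ_k + B θ ≤ E, provided the uncertainty set { a : L ≤ a_k ≤ U, ∑_k a_k ≤ B } is compact with nonempty interior (L < U, N·L < B). -/
import Mathlib


set_option maxHeartbeats 2000000 in
/-- Robust counterpart reformulation: the semi-infinite constraint is equivalent to
the existence of feasible dual multipliers. -/
theorem stmt_5 (N : ℕ) (x : Fin N → ℝ) (E L U B : ℝ)
    (hx : ∀ k, 0 ≤ x k) (hLU : L < U) (hB : (N : ℝ) * L < B) :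
    (∀ a : Fin N → ℝ, (∀ k, L ≤ a k ∧ a k ≤ U) → (∑ k, a k) ≤ B →
        (∑ k, a k * x k) ≤ E)
    ↔
    (∃ β γ : Fin N → ℝ, ∃ θ : ℝ,
        (∀ k, 0 ≤ β k) ∧ (∀ k, 0 ≤ γ k) ∧ 0 ≤ θ ∧
        (∀ k, β k - γ k + θ = x k) ∧
        (∑ k, U * β k) - (∑ k, L * γ k) + B * θ ≤ E) := by
  constructor
  · -- forward: construct optimal dual multipliers
    intro h
    by_cases hUB : (N : ℝ) * U ≤ B
    · -- budget never binds: take β = x, γ = 0, θ = 0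
      refine ⟨x, 0, 0, hx, fun k => le_refl 0, le_refl 0, fun k => by simp, ?_⟩
      have := h (fun _ => U) (fun k => ⟨hLU.le, le_refl U⟩)
        (by simp [Finset.sum_const, mul_comm]; linarith [hUB])
      simpa using this
    · push_neg at hUB
      set c : ℝ := U - L with hc_def
      set s : ℝ := B - (N : ℝ) * L with hs_def
      have hc : 0 < c := by simp [hc_def]; linarith
      have hs : 0 < s := by simp [hs_def]; linarith
      have hsN : s < (N : ℝ) * c := by simp [hs_def, hc_def]; nlinarith
      have hN : 0 < N := by
        rcases Nat.eq_zero_or_pos N with h0 | h0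
        · exfalso; rw [h0] at hsN; push_cast at hsN; nlinarith
        · exact h0
      set q : ℕ := ⌊s / c⌋₊ with hq_def
      have hq1 : (q : ℝ) * c ≤ s := by
        have := Nat.floor_le (show (0:ℝ) ≤ s / c by positivity)
        calc (q : ℝ) * c ≤ (s / c) * c := by nlinarith
          _ = s := by field_simp
      have hq2 : s < ((q : ℝ) + 1) * c := by
        have := Nat.lt_floor_add_one (s / c)
        calc s = (s / c) * c := by field_simp
          _ < ((q : ℝ) + 1) * c := by nlinarith
      have hqN : q < N := by
        rw [hq_def, Nat.floor_lt (by positivity)]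
        rw [div_lt_iff₀ hc]
        linarith
      set σ := Tuple.sort x with hσ_def
      have hmono : Monotone (x ∘ σ) := Tuple.monotone_sort x
      set i0 : Fin N := ⟨N - 1 - q, by omega⟩ with hi0_def
      set θ : ℝ := x (σ i0) with hθ_def
      set ext : ℕ → ℝ := fun r => min (max (s - (r : ℝ) * c) 0) c with hext_def
      have hext0 : ∀ r, 0 ≤ ext r := fun r => le_min (le_max_right _ _) hc.le
      have hextc : ∀ r, ext r ≤ c := fun r => min_le_right _ _
      set a : Fin N → ℝ := fun k => L + ext (N - 1 - (σ.symm k : ℕ)) with ha_def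
      have ha_bnd : ∀ k, L ≤ a k ∧ a k ≤ U := by
        intro k
        constructor
        · simp [ha_def]; linarith [hext0 (N - 1 - (σ.symm k : ℕ))]
        · have := hextc (N - 1 - (σ.symm k : ℕ))
          simp [ha_def, hc_def] at *
          linarith
      -- telescoping sum of ext over ranks
      have htel : ∀ i : ℕ, ext i = min s (((i : ℝ) + 1) * c) - min s ((i : ℝ) * c) := by
        intro i
        rcases le_total s ((i : ℝ) * c) with h1 | h1
        · have h2 : s ≤ ((i : ℝ) + 1) * c := by nlinarith
          rw [min_eq_left h1, min_eq_left h2, hext_def]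
          simp
          rw [max_eq_right (by linarith), min_eq_left hc.le]
        · rcases le_total s (((i : ℝ) + 1) * c) with h2 | h2
          · rw [min_eq_left h2, min_eq_right h1, hext_def]
            simp
            rw [max_eq_left (by linarith), min_eq_left (by nlinarith)]
          · rw [min_eq_right h2, min_eq_right h1, hext_def]
            simp
            rw [max_eq_left (by nlinarith), min_eq_right (by nlinarith)]
            ring
      have hsum_range : ∑ i ∈ Finset.range N, ext i = s := by
        have h0 := Finset.sum_range_sub (fun i => min s ((i : ℝ) * c)) N
        push_cast at h0
        have h1 : ∑ i ∈ Finset.range N, ext i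
            = ∑ i ∈ Finset.range N,
                (min s (((i : ℝ) + 1) * c) - min s ((i : ℝ) * c)) :=
          Finset.sum_congr rfl (fun i _ => htel i)
        rw [h1, h0, min_eq_left hsN.le]
        simp [hs.le]
      have hsum_ext : ∑ j : Fin N, ext (N - 1 - (j : ℕ)) = s := by
        have hrev : ∑ j : Fin N, ext (N - 1 - (j : ℕ))
            = ∑ j : Fin N, ext (N - 1 - ((Fin.revPerm j : Fin N) : ℕ)) :=
          (Equiv.sum_comp Fin.revPerm (fun j : Fin N => ext (N - 1 - (j : ℕ)))).symm
        rw [hrev]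
        have : ∀ j : Fin N, N - 1 - ((Fin.revPerm j : Fin N) : ℕ) = (j : ℕ) := by
          intro j
          have := j.isLt
          simp [Fin.revPerm, Fin.val_rev]
          omega
        simp only [this]
        rw [Fin.sum_univ_eq_sum_range (fun i => ext i)]
        exact hsum_range
      have hsum_a : ∑ k, a k = B := by
        have : ∑ k, ext (N - 1 - ((σ.symm k : Fin N) : ℕ))
            = ∑ j : Fin N, ext (N - 1 - (j : ℕ)) :=
          Equiv.sum_comp σ.symm (fun j : Fin N => ext (N - 1 - (j : ℕ)))
        simp only [ha_def, Finset.sum_add_distrib, Finset.sum_const, Finset.card_univ,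
          Fintype.card_fin, nsmul_eq_mul]
        rw [this, hsum_ext, hs_def]; ring
      have hθ0 : 0 ≤ θ := hx _
      -- key pointwise identity
      have key : ∀ k, U * max (x k - θ) 0 - L * max (θ - x k) 0 = a k * (x k - θ) := by
        intro k
        have hxk : x k = x (σ (σ.symm k)) := by simp
        rcases lt_trichotomy ((σ.symm k : Fin N) : ℕ) (N - 1 - q) with hj | hj | hj
        · -- small index: a k = L, x k ≤ θ
          have hle : x k ≤ θ := by
            rw [hxk, hθ_def]
            exact hmono (show σ.symm k ≤ i0 from Fin.le_def.mpr (le_of_lt hj))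
          have hr : q + 1 ≤ N - 1 - ((σ.symm k : Fin N) : ℕ) := by omega
          have hrc : ((q : ℝ) + 1) * c ≤ ((N - 1 - ((σ.symm k : Fin N) : ℕ) : ℕ) : ℝ) * c := by
            have : ((q : ℝ) + 1) ≤ ((N - 1 - ((σ.symm k : Fin N) : ℕ) : ℕ) : ℝ) := by
              exact_mod_cast hr
            nlinarith
          have hext_eq : ext (N - 1 - ((σ.symm k : Fin N) : ℕ)) = 0 := by
            rw [hext_def]
            simp only
            rw [max_eq_right (by linarith), min_eq_left hc.le]
          have ha_eq : a k = L := by rw [ha_def]; simp [hext_eq]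
          rw [max_eq_right (by linarith), max_eq_left (by linarith), ha_eq]
          ring
        · -- equal index: x k = θ
          have : σ.symm k = i0 := Fin.ext hj
          have hxθ : x k = θ := by rw [hxk, this, hθ_def]
          rw [hxθ]; simp
        · -- large index: a k = U, x k ≥ θ
          have hge : θ ≤ x k := by
            rw [hxk, hθ_def]
            exact hmono (show i0 ≤ σ.symm k from Fin.le_def.mpr (le_of_lt hj))
          have hr : N - 1 - ((σ.symm k : Fin N) : ℕ) + 1 ≤ q := by
            have := (σ.symm k).isLt
            omega
          have hrc : (((N - 1 - ((σ.symm k : Fin N) : ℕ) : ℕ) : ℝ) + 1) * c ≤ (q : ℝ) * c := by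
            have : ((N - 1 - ((σ.symm k : Fin N) : ℕ) : ℕ) : ℝ) + 1 ≤ (q : ℝ) := by
              exact_mod_cast hr
            nlinarith
          have hext_eq : ext (N - 1 - ((σ.symm k : Fin N) : ℕ)) = c := by
            rw [hext_def]
            simp only
            rw [max_eq_left (by nlinarith), min_eq_right (by nlinarith)]
          have ha_eq : a k = U := by rw [ha_def]; simp [hext_eq, hc_def]
          rw [max_eq_left (by linarith), max_eq_right (by linarith), ha_eq]
          ring
      refine ⟨fun k => max (x k - θ) 0, fun k => max (θ - x k) 0, θ,
        fun k => le_max_right _ _, fun k => le_max_right _ _, hθ0, ?_, ?_⟩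
      · intro k
        dsimp only
        rcases le_total (x k) θ with h' | h'
        · rw [max_eq_right (by linarith), max_eq_left (by linarith)]; ring
        · rw [max_eq_left (by linarith), max_eq_right (by linarith)]; ring
      · have step : (∑ k, U * max (x k - θ) 0) - (∑ k, L * max (θ - x k) 0) + B * θ
            = ∑ k, a k * x k := by
          rw [← Finset.sum_sub_distrib]
          have : ∑ k, (U * max (x k - θ) 0 - L * max (θ - x k) 0)
              = ∑ k, a k * (x k - θ) := Finset.sum_congr rfl (fun k _ => key k)
          rw [this]
          have : ∑ k, a k * (x k - θ) = (∑ k, a k * x k) - (∑ k, a k) * θ := by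
            rw [Finset.sum_mul, ← Finset.sum_sub_distrib]
            exact Finset.sum_congr rfl (fun k _ => by ring)
          rw [this, hsum_a]; ring
        rw [step]
        exact h a ha_bnd (le_of_eq hsum_a)
  · -- backward: weak duality
    rintro ⟨β, γ, θ, hβ, hγ, hθ, heq, hobj⟩ a ha hsum
    have h1 : ∑ k, a k * x k
        = (∑ k, a k * β k) - (∑ k, a k * γ k) + (∑ k, a k) * θ := by
      rw [Finset.sum_mul, ← Finset.sum_sub_distrib, ← Finset.sum_add_distrib]
      exact Finset.sum_congr rfl (fun k _ => by rw [← heq k]; ring)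
    rw [h1]
    have h2 : ∑ k, a k * β k ≤ ∑ k, U * β k :=
      Finset.sum_le_sum fun k _ => mul_le_mul_of_nonneg_right (ha k).2 (hβ k)
    have h3 : ∑ k, L * γ k ≤ ∑ k, a k * γ k :=
      Finset.sum_le_sum fun k _ => mul_le_mul_of_nonneg_right (ha k).1 (hγ k)
    have h4 : (∑ k, a k) * θ ≤ B * θ := mul_le_mul_of_nonneg_right hsum hθ
    linarith
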